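/- arXiv:2412.09163 — 4 statements merged into one kernel-verified Lean document; each statement's English description precedes it below -/
import Mathlib

section
/- If V_1 ⊆ V_2 ⊆ V_3 is a chain of submodules of a representation of the free algebra A on n generators such that V_1 is complete in V_2 and V_2 is complete in V_3, then V_1 is complete in V_3. -/
/-- The action of a word `p` (a list of generator indices) on a representation of the
free algebra on `n` generators given by the endomorphisms `T i`: the first letter acts first. -/
def actWord {k V : Type*} [Field k] [AddCommGroup V] [Module k V] {n : ℕ}
    (T : Fin n → V →ₗ[k] V) : List (Fin n) → V →ₗ[k] V
  | [] => LinearMap.id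
  | i :: p => (actWord T p).comp (T i)

/-- A subspace is invariant under the action of each generator. -/
def RepInvariant {k V : Type*} [Field k] [AddCommGroup V] [Module k V] {n : ℕ}
    (T : Fin n → V →ₗ[k] V) (W : Submodule k V) : Prop :=
  ∀ i : Fin n, ∀ w ∈ W, T i w ∈ W

/-- A submodule `W ⊆ V` is complete: every `v ∈ V` is sent into `W` by all sufficiently
long words. -/
def RepComplete {k V : Type*} [Field k] [AddCommGroup V] [Module k V] {n : ℕ}
    (T : Fin n → V →ₗ[k] V) (W : Submodule k V) : Prop :=
  ∀ v : V, ∃ m : ℕ, 1 ≤ m ∧ ∀ p : List (Fin n), m ≤ p.length → actWord T p v ∈ W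

/-- `W` is a complete submodule of the subrepresentation `U`. -/
def RepCompleteIn {k V : Type*} [Field k] [AddCommGroup V] [Module k V] {n : ℕ}
    (T : Fin n → V →ₗ[k] V) (W U : Submodule k V) : Prop :=
  ∀ v ∈ U, ∃ m : ℕ, 1 ≤ m ∧ ∀ p : List (Fin n), m ≤ p.length → actWord T p v ∈ W

theorem actWord_append {k V : Type*} [Field k] [AddCommGroup V] [Module k V] {n : ℕ}
    (T : Fin n → V →ₗ[k] V) (p q : List (Fin n)) :
    actWord T (p ++ q) = (actWord T q).comp (actWord T p) := by
  induction p with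
  | nil => rfl
  | cons i p ih => simp [actWord, ih, LinearMap.comp_assoc]

/-- Transitivity of completeness along a chain `V₁ ⊆ V₂ ⊆ V₃`. -/
theorem stmt2 {k V : Type*} [Field k] [AddCommGroup V] [Module k V] {n : ℕ} (hn : 2 ≤ n)
    (T : Fin n → V →ₗ[k] V) (V₁ V₂ V₃ : Submodule k V)
    (h12 : V₁ ≤ V₂) (h23 : V₂ ≤ V₃)
    (hinv1 : RepInvariant T V₁) (hinv2 : RepInvariant T V₂) (hinv3 : RepInvariant T V₃)
    (hc12 : RepCompleteIn T V₁ V₂) (hc23 : RepCompleteIn T V₂ V₃) :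
    RepCompleteIn T V₁ V₃ := by
  intro v hv
  obtain ⟨m₁, hm₁, h1⟩ := hc23 v hv
  choose f hf1 hf2 using fun (p : List.Vector (Fin n) m₁) =>
    hc12 (actWord T p.1 v) (h1 p.1 (le_of_eq p.2.symm))
  refine ⟨m₁ + (@Finset.univ (List.Vector (Fin n) m₁) inferInstance).sup f, by omega, ?_⟩
  intro q hq
  have hlenq : m₁ ≤ q.length := le_trans (Nat.le_add_right _ _) hq
  have hsplit : q = q.take m₁ ++ q.drop m₁ := (List.take_append_drop _ _).symm
  have hlenp : (q.take m₁).length = m₁ := by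
    rw [List.length_take]; omega
  rw [hsplit, actWord_append, LinearMap.comp_apply]
  apply hf2 ⟨q.take m₁, hlenp⟩
  have hle : f ⟨q.take m₁, hlenp⟩ ≤ (@Finset.univ (List.Vector (Fin n) m₁) inferInstance).sup f :=
    Finset.le_sup (@Finset.mem_univ _ (inferInstance : Fintype (List.Vector (Fin n) m₁)) _)
  have : (q.drop m₁).length = q.length - m₁ := List.length_drop
  omega
end

section
/- Let (π, V) be an irreducible (simple, nonzero) representation of the free algebra A on n generators. If V is degenerate, i.e., there exists a nonzero v ∈ V and m ≥ 1 with v·p = 0 for all words p of length ≥ m, then dim V = 1 and π(e_i) = 0 for all 1 ≤ i ≤ n. -/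
/-! A nonzero vector killed by all long words yields, by following one generator that does not
kill it, a nonzero vector killed by every generator. That vector spans the common kernel of the
generators, which is invariant, hence everything by irreducibility; so all generators vanish,
every subspace is invariant, and the line through the vector is all of `V`. -/

section

variable {k V : Type*} [Field k] [AddCommGroup V] [Module k V] {n : ℕ} (T : Fin n → V →ₗ[k] V)

theorem actWord_cons_apply (i : Fin n) (p : List (Fin n)) (v : V) :
    actWord T (i :: p) v = actWord T p (T i v) :=
  rfl

theorem exists_ne_zero_forall_apply_eq_zero_of_actWord (m : ℕ) {v : V} (hv : v ≠ 0)
    (hm : ∀ p : List (Fin n), m ≤ p.length → actWord T p v = 0) :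
    ∃ w : V, w ≠ 0 ∧ ∀ i, T i w = 0 := by
  induction m generalizing v with
  | zero => exact absurd (hm [] le_rfl) hv
  | succ m ih =>
    by_cases hkill : ∀ i, T i v = 0
    · exact ⟨v, hv, hkill⟩
    · obtain ⟨i, hi⟩ := not_forall.mp hkill
      refine ih hi fun p hp => ?_
      rw [← actWord_cons_apply]
      exact hm (i :: p) (by simpa using hp)

theorem repInvariant_iInf_ker : RepInvariant T (⨅ i, LinearMap.ker (T i)) := by
  intro i w hw
  rw [(Submodule.mem_iInf _).mp hw i]
  exact Submodule.zero_mem _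

theorem repInvariant_of_forall_eq_zero (hT : ∀ i, T i = 0) (W : Submodule k V) :
    RepInvariant T W := by
  intro i w _
  rw [hT i, LinearMap.zero_apply]
  exact W.zero_mem

variable {T}

theorem forall_eq_zero_of_irreducible
    (hirr : ∀ W : Submodule k V, RepInvariant T W → W = ⊥ ∨ W = ⊤)
    {w : V} (hw : w ≠ 0) (hkill : ∀ i, T i w = 0) (i : Fin n) : T i = 0 := by
  have hwK : w ∈ ⨅ i, LinearMap.ker (T i) := (Submodule.mem_iInf _).mpr hkill
  rcases hirr _ (repInvariant_iInf_ker T) with hK | hK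
  · exact absurd (by simpa [hK] using hwK) hw
  · ext x
    have hx : x ∈ ⨅ i, LinearMap.ker (T i) := hK ▸ Submodule.mem_top
    exact (Submodule.mem_iInf _).mp hx i

theorem finrank_eq_one_of_irreducible_of_forall_eq_zero
    (hirr : ∀ W : Submodule k V, RepInvariant T W → W = ⊥ ∨ W = ⊤)
    (hT : ∀ i, T i = 0) {w : V} (hw : w ≠ 0) : Module.finrank k V = 1 := by
  rcases hirr _ (repInvariant_of_forall_eq_zero T hT (k ∙ w)) with hspan | hspan
  · exact absurd (by simpa [hspan] using Submodule.mem_span_singleton_self (R := k) w) hw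
  · rw [← finrank_top k V, ← hspan, finrank_span_singleton (K := k) hw]

end

theorem stmt10_general {k V : Type*} [Field k] [AddCommGroup V] [Module k V] {n : ℕ}
    (T : Fin n → V →ₗ[k] V)
    (hirr : ∀ W : Submodule k V, RepInvariant T W → W = ⊥ ∨ W = ⊤)
    (hdeg : ∃ v : V, v ≠ 0 ∧ ∃ m : ℕ, 1 ≤ m ∧
      ∀ p : List (Fin n), m ≤ p.length → actWord T p v = 0) :
    Module.finrank k V = 1 ∧ ∀ i : Fin n, T i = 0 := by
  obtain ⟨v, hv, m, -, hm⟩ := hdeg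
  obtain ⟨w, hw, hkill⟩ := exists_ne_zero_forall_apply_eq_zero_of_actWord T m hv hm
  have hT : ∀ i, T i = 0 := forall_eq_zero_of_irreducible hirr hw hkill
  exact ⟨finrank_eq_one_of_irreducible_of_forall_eq_zero hirr hT hw, hT⟩

/-- A degenerate irreducible representation of the free algebra is one-dimensional with
all generators acting as zero. -/
theorem stmt10 {k V : Type*} [Field k] [AddCommGroup V] [Module k V] {n : ℕ} (hn : 2 ≤ n)
    (T : Fin n → V →ₗ[k] V)
    (hne : ∃ v : V, v ≠ 0)
    (hirr : ∀ W : Submodule k V, RepInvariant T W → W = ⊥ ∨ W = ⊤)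
    (hdeg : ∃ v : V, v ≠ 0 ∧ ∃ m : ℕ, 1 ≤ m ∧
      ∀ p : List (Fin n), m ≤ p.length → actWord T p v = 0) :
    Module.finrank k V = 1 ∧ ∀ i : Fin n, T i = 0 :=
  stmt10_general T hirr hdeg
end

section
/- Let (π, V) be an irreducible representation of the free algebra A on n generators with π(e_i) ≠ 0 for at least one i. Then V is full: the only complete submodule of V is V itself; and V is nondegenerate: for every nonzero v ∈ V and every m there is a word p of length ≥ m with v·p ≠ 0. -/
section

variable {k V : Type*} [Field k] [AddCommGroup V] [Module k V] {n : ℕ}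

def RepNondegenerate (T : Fin n → V →ₗ[k] V) : Prop :=
  ∀ v : V, v ≠ 0 → ∀ m : ℕ, ∃ p : List (Fin n), m ≤ p.length ∧ actWord T p v ≠ 0

theorem repInvariant_iInf_ker_s11 (T : Fin n → V →ₗ[k] V) :
    RepInvariant T (⨅ j, LinearMap.ker (T j)) := by
  intro i w hw
  simp only [Submodule.mem_iInf, LinearMap.mem_ker] at hw ⊢
  simp [hw i]

theorem exists_apply_ne_zero_of_irreducible (T : Fin n → V →ₗ[k] V)
    (hirr : ∀ W : Submodule k V, RepInvariant T W → W = ⊥ ∨ W = ⊤)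
    (hnz : ∃ i : Fin n, T i ≠ 0) {v : V} (hv : v ≠ 0) : ∃ j : Fin n, T j v ≠ 0 := by
  rcases hirr _ (repInvariant_iInf_ker_s11 T) with hker | hker
  · by_contra! h
    have hmem : v ∈ ⨅ j, LinearMap.ker (T j) := by
      simpa only [Submodule.mem_iInf, LinearMap.mem_ker] using h
    exact hv (by simpa [hker] using hmem)
  · obtain ⟨i, hi⟩ := hnz
    refine absurd (LinearMap.ext fun w => ?_) hi
    have hmem : w ∈ ⨅ j, LinearMap.ker (T j) := hker ▸ Submodule.mem_top
    exact (Submodule.mem_iInf _).1 hmem i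

theorem exists_actWord_length_eq_ne_zero (T : Fin n → V →ₗ[k] V)
    (hT : ∀ v : V, v ≠ 0 → ∃ j : Fin n, T j v ≠ 0) (m : ℕ) :
    ∀ v : V, v ≠ 0 → ∃ p : List (Fin n), p.length = m ∧ actWord T p v ≠ 0 := by
  induction m with
  | zero => exact fun v hv => ⟨[], rfl, hv⟩
  | succ m ih =>
    intro v hv
    obtain ⟨j, hj⟩ := hT v hv
    obtain ⟨p, hp, hpv⟩ := ih (T j v) hj
    exact ⟨j :: p, by simp [hp], hpv⟩

theorem repNondegenerate_of_forall_exists_apply_ne_zero (T : Fin n → V →ₗ[k] V)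
    (hT : ∀ v : V, v ≠ 0 → ∃ j : Fin n, T j v ≠ 0) : RepNondegenerate T := by
  intro v hv m
  obtain ⟨p, hp, hpv⟩ := exists_actWord_length_eq_ne_zero T hT m v hv
  exact ⟨p, hp.ge, hpv⟩

theorem RepNondegenerate.subsingleton_of_repComplete_bot {T : Fin n → V →ₗ[k] V}
    (hT : RepNondegenerate T) (hbot : RepComplete T ⊥) : Subsingleton V := by
  refine subsingleton_of_forall_eq 0 fun v => ?_
  by_contra hv
  obtain ⟨m, -, hm⟩ := hbot v
  obtain ⟨p, hp, hpv⟩ := hT v hv m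
  exact hpv ((Submodule.mem_bot k).1 (hm p hp))

end

theorem stmt11_general {k V : Type*} [Field k] [AddCommGroup V] [Module k V] {n : ℕ}
    (T : Fin n → V →ₗ[k] V)
    (hirr : ∀ W : Submodule k V, RepInvariant T W → W = ⊥ ∨ W = ⊤)
    (hnz : ∃ i : Fin n, T i ≠ 0) :
    (∀ W : Submodule k V, RepInvariant T W → RepComplete T W → W = ⊤) ∧
      ∀ v : V, v ≠ 0 → ∀ m : ℕ,
        ∃ p : List (Fin n), m ≤ p.length ∧ actWord T p v ≠ 0 := by
  have hnd : RepNondegenerate T := repNondegenerate_of_forall_exists_apply_ne_zero T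
    fun _ hv => exists_apply_ne_zero_of_irreducible T hirr hnz hv
  refine ⟨fun W hW hcomplete => ?_, hnd⟩
  rcases hirr W hW with rfl | rfl
  · have := hnd.subsingleton_of_repComplete_bot hcomplete
    exact Subsingleton.elim _ _
  · rfl

/-- A nonzero irreducible representation of the free algebra is full and nondegenerate. -/
theorem stmt11 {k V : Type*} [Field k] [AddCommGroup V] [Module k V] {n : ℕ} (hn : 2 ≤ n)
    (T : Fin n → V →ₗ[k] V)
    (hne : ∃ v : V, v ≠ 0)
    (hirr : ∀ W : Submodule k V, RepInvariant T W → W = ⊥ ∨ W = ⊤)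
    (hnz : ∃ i : Fin n, T i ≠ 0) :
    (∀ W : Submodule k V, RepInvariant T W → RepComplete T W → W = ⊤) ∧
      ∀ v : V, v ≠ 0 → ∀ m : ℕ,
        ∃ p : List (Fin n), m ≤ p.length ∧ actWord T p v ≠ 0 :=
  stmt11_general T hirr hnz
end

section
/- Let k be a field and V = k³ with the action of the free algebra on two generators given by π(e_1) = [[1,1,0],[0,0,1],[0,0,0]] and π(e_2) = [[1,0,0],[0,0,1],[0,0,0]]. Then the line k·E_1 spanned by the first standard basis vector is a proper complete submodule (so V is not full), while ker π(e_1) ∩ ker π(e_2) = {0} (so V is nondegenerate). -/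
lemma memW_iff {k : Type*} [Field k] (v : Fin 3 → k) :
    v ∈ Submodule.span k {(Pi.single 0 1 : Fin 3 → k)} ↔ v 1 = 0 ∧ v 2 = 0 := by
  rw [Submodule.mem_span_singleton]
  constructor
  · rintro ⟨a, rfl⟩
    constructor <;> simp [Pi.single_apply]
  · rintro ⟨h1, h2⟩
    exact ⟨v 0, funext fun i => by fin_cases i <;> simp [Pi.single_apply, h1, h2]⟩

lemma invAct {k V : Type*} [Field k] [AddCommGroup V] [Module k V] {n : ℕ}
    {T : Fin n → V →ₗ[k] V} {W : Submodule k V} (hinv : RepInvariant T W) :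
    ∀ p : List (Fin n), ∀ w ∈ W, actWord T p w ∈ W := by
  intro p
  induction p with
  | nil => intro w hw; exact hw
  | cons i p ih =>
      intro w hw
      exact ih _ (hinv i w hw)

/-- An explicit three-dimensional representation that is nondegenerate but not full:
the line spanned by the first basis vector is a proper complete submodule. -/
theorem stmt13 {k : Type*} [Field k] :
    ∀ T : Fin 2 → (Fin 3 → k) →ₗ[k] (Fin 3 → k),
    T = ![(!![(1:k), 1, 0; 0, 0, 1; 0, 0, 0]).mulVecLin,
          (!![(1:k), 0, 0; 0, 0, 1; 0, 0, 0]).mulVecLin] →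
    (RepInvariant T (Submodule.span k {(Pi.single 0 1 : Fin 3 → k)}) ∧
      RepComplete T (Submodule.span k {(Pi.single 0 1 : Fin 3 → k)}) ∧
      Submodule.span k {(Pi.single 0 1 : Fin 3 → k)} ≠ ⊤) ∧
      LinearMap.ker (T 0) ⊓ LinearMap.ker (T 1) = ⊥ := by
  intro T hT
  subst hT
  have hinv : RepInvariant ![(!![(1:k), 1, 0; 0, 0, 1; 0, 0, 0]).mulVecLin,
          (!![(1:k), 0, 0; 0, 0, 1; 0, 0, 0]).mulVecLin]
      (Submodule.span k {(Pi.single 0 1 : Fin 3 → k)}) := by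
    intro i w hw
    rw [memW_iff] at hw ⊢
    fin_cases i <;>
      simp [Matrix.mulVecLin_apply, Matrix.mulVec, dotProduct,
        Fin.sum_univ_three, hw.1, hw.2]
  refine ⟨⟨hinv, ?_, ?_⟩, ?_⟩
  · intro v
    refine ⟨2, one_le_two, ?_⟩
    intro p hp
    match p with
    | i :: j :: q =>
      have : actWord ![(!![(1:k), 1, 0; 0, 0, 1; 0, 0, 0]).mulVecLin,
          (!![(1:k), 0, 0; 0, 0, 1; 0, 0, 0]).mulVecLin] (i :: j :: q) v
          = actWord _ q ((![(!![(1:k), 1, 0; 0, 0, 1; 0, 0, 0]).mulVecLin,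
          (!![(1:k), 0, 0; 0, 0, 1; 0, 0, 0]).mulVecLin] j)
            ((![(!![(1:k), 1, 0; 0, 0, 1; 0, 0, 0]).mulVecLin,
          (!![(1:k), 0, 0; 0, 0, 1; 0, 0, 0]).mulVecLin] i) v)) := rfl
      rw [this]
      apply invAct hinv
      rw [memW_iff]
      fin_cases i <;> fin_cases j <;>
        simp [Matrix.mulVecLin_apply, Matrix.mulVec, dotProduct,
          Fin.sum_univ_three]
  · intro h
    have h1 : (Pi.single 1 1 : Fin 3 → k) ∈
        Submodule.span k {(Pi.single 0 1 : Fin 3 → k)} := h ▸ Submodule.mem_top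
    rw [memW_iff] at h1
    simp at h1
  · rw [eq_bot_iff]
    intro v hv
    obtain ⟨h0, h1⟩ := Submodule.mem_inf.mp hv
    rw [LinearMap.mem_ker] at h0 h1
    have e00 := congrFun h0 0
    have e11 := congrFun h1 1
    have e10 := congrFun h1 0
    simp [Matrix.mulVecLin_apply, Matrix.mulVec, dotProduct,
      Fin.sum_univ_three] at e00 e11 e10
    have : v = 0 := funext fun i => by
      fin_cases i <;> simp_all <;> linarith [e00, e10, e11]
    simpa using this
end
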